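/- Up to isomorphism, the unique configuration of four one-dimensional subtori through the origin in a complex abelian surface, pairwise intersecting only at the origin, is given by Y = C × C with C = ℂ/(ℤ+ℤτ), τ = e^{πi/3}, and the four curves w = 0, z = 0, w = z, w = τz. -/

import Mathlib

/-!
By the hypothesis on `π`, the lattice `Γ` splits along any two of the lines: if `a ∈ W i`,
`b ∈ W j` and `a + b ∈ Γ`, then `a ∈ Γ`. A line contained in `Γ` is impossible, so the four
lines are distinct, and a linear change of coordinates makes them `ℂ(0,1)`, `ℂ(1,0)`, `ℂ(1,1)`
and `ℂ(c,1)`. Splitting along these six pairs forces `Γ = Λ × Λ` with `cΛ = Λ` and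
`(1 - c)Λ = Λ`. Since `Λ` is a discrete subgroup of `ℂ`, both `c` and `1 - c` have modulus one,
so `c` is `τ = e^{πi/3}` or `1 - τ = τ⁻¹`. Then `Λ` is stable under `τ`, and a shortest nonzero
vector `m` of `Λ` gives `Λ = m(ℤ + ℤτ)`, because `ℤ + ℤτ` is `1`-dense in `ℂ`. Rescaling by `m⁻¹`,
and swapping the coordinates when `c = 1 - τ`, gives the stated normal form.
-/

open Complex Module Submodule

section DiscreteSubgroups

lemma AddSubgroup.discreteTopology_comap {G H : Type*} [AddGroup G] [AddGroup H]
    [TopologicalSpace G] [TopologicalSpace H] (Γ : AddSubgroup H) [DiscreteTopology Γ]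
    {φ : G →+ H} (hφ : Continuous φ) (hφi : Function.Injective φ) :
    DiscreteTopology (Γ.comap φ) :=
  DiscreteTopology.of_continuous_injective (f := fun x : Γ.comap φ => (⟨φ x, x.2⟩ : Γ))
    (by fun_prop) fun _ _ h => Subtype.ext (hφi (congrArg Subtype.val h))

lemma AddSubgroup.discreteTopology_of_linearIndependent {ι E : Type*} [Fintype ι]
    [NormedAddCommGroup E] [NormedSpace ℝ E] {b : ι → E} (hb : LinearIndependent ℝ b)
    {Γ : AddSubgroup E} (hΓ : (Γ : Set E) = {x | ∃ c : ι → ℤ, x = ∑ i, c i • b i}) :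
    DiscreteTopology Γ := by
  set F := span ℝ (Set.range b)
  set L := span ℤ (Set.range (Basis.span hb))
  have hL : ∀ x ∈ Γ, ∃ y ∈ L, (y : E) = x := by
    intro x hx
    obtain ⟨c, rfl⟩ : ∃ c : ι → ℤ, x = ∑ i, c i • b i := by
      rwa [← SetLike.mem_coe, hΓ] at hx
    exact ⟨∑ i, c i • Basis.span hb i,
      sum_mem fun i _ => zsmul_mem (subset_span (Set.mem_range_self i)) _, by simp⟩
  have hF : ∀ x ∈ Γ, x ∈ F := fun x hx => by
    obtain ⟨y, -, rfl⟩ := hL x hx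
    exact y.2
  have hL' : ∀ x : Γ, (⟨x, hF x x.2⟩ : F) ∈ L := fun x => by
    obtain ⟨y, hy, hyx⟩ := hL x x.2
    rwa [← show y = ⟨x, hF x x.2⟩ from Subtype.ext hyx]
  exact DiscreteTopology.of_continuous_injective
    (f := fun x : Γ => (⟨⟨x, hF x x.2⟩, hL' x⟩ : L)) (by fun_prop)
    fun _ _ h => Subtype.ext (congrArg (fun z : L => ((z : F) : E)) h)

lemma AddSubgroup.exists_norm_le_of_discreteTopology {E : Type*} [NormedAddCommGroup E]
    [ProperSpace E] (Λ : AddSubgroup E) [DiscreteTopology Λ] (hΛ : Λ ≠ ⊥) :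
    ∃ m ∈ Λ, m ≠ 0 ∧ ∀ z ∈ Λ, z ≠ 0 → ‖m‖ ≤ ‖z‖ := by
  obtain ⟨x, hxΛ, hx0⟩ := Λ.bot_or_exists_ne_zero.resolve_left hΛ
  have hfin : {z ∈ (Λ : Set E) | ‖z‖ ≤ ‖x‖ ∧ z ≠ 0}.Finite :=
    (Metric.finite_isBounded_inter_isClosed DiscreteTopology.isDiscrete
      Metric.isBounded_closedBall Λ.isClosed_of_discrete).subset
      fun z hz => ⟨mem_closedBall_zero_iff.mpr hz.2.1, hz.1⟩
  obtain ⟨m, ⟨hmΛ, hmx, hm0⟩, hmin⟩ :=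
    Set.exists_min_image _ (‖·‖) hfin ⟨x, hxΛ, le_rfl, hx0⟩
  refine ⟨m, hmΛ, hm0, fun z hzΛ hz0 => ?_⟩
  rcases le_total ‖z‖ ‖x‖ with hzx | hxz
  · exact hmin z ⟨hzΛ, hzx, hz0⟩
  · exact hmx.trans hxz

lemma norm_eq_one_of_mul_mem_iff {𝕜 : Type*} [NormedField 𝕜] {Λ : AddSubgroup 𝕜} {m : 𝕜}
    (hmΛ : m ∈ Λ) (hm0 : m ≠ 0) (hmin : ∀ z ∈ Λ, z ≠ 0 → ‖m‖ ≤ ‖z‖) {μ : 𝕜} (hμ0 : μ ≠ 0)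
    (hμ : ∀ z, μ * z ∈ Λ ↔ z ∈ Λ) : ‖μ‖ = 1 := by
  have hm : 0 < ‖m‖ := norm_pos_iff.mpr hm0
  have h₁ : 1 * ‖m‖ ≤ ‖μ‖ * ‖m‖ := by
    simpa using hmin _ ((hμ m).mpr hmΛ) (mul_ne_zero hμ0 hm0)
  have h₂ : 1 * ‖m‖ ≤ ‖μ‖⁻¹ * ‖m‖ := by
    simpa using hmin (μ⁻¹ * m) ((hμ _).mp (by rwa [mul_inv_cancel_left₀ hμ0]))
      (mul_ne_zero (inv_ne_zero hμ0) hm0)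
  exact le_antisymm ((one_le_inv₀ (norm_pos_iff.mpr hμ0)).mp (le_of_mul_le_mul_right h₂ hm))
    (le_of_mul_le_mul_right h₁ hm)

lemma Submodule.not_subset_of_countable {K V : Type*} [DivisionRing K] [Uncountable K]
    [AddCommGroup V] [Module K V] {W : Submodule K V} (hW : W ≠ ⊥) {S : Set V}
    (hS : S.Countable) : ¬ (W : Set V) ⊆ S := by
  obtain ⟨v, hv, hv0⟩ := W.ne_bot_iff.mp hW
  intro hWS
  exact Set.not_countable_univ (α := K) (Set.MapsTo.countable_of_injOn (f := (· • v))
    (fun t _ => hWS (W.smul_mem t hv)) (smul_left_injective K hv0).injOn hS)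

end DiscreteSubgroups

section Splitting

variable {R V : Type*} [Ring R] [AddCommGroup V] [Module R V]

def SplitsAlong (Γ : AddSubgroup V) (A B : Submodule R V) : Prop :=
  ∀ a ∈ A, ∀ b ∈ B, a + b ∈ Γ → a ∈ Γ

def PairwiseSplitsAlong {ι : Type*} (Γ : AddSubgroup V) (L : ι → Submodule R V) : Prop :=
  Pairwise fun i j => SplitsAlong Γ (L i) (L j)

variable {Γ : AddSubgroup V} {A B : Submodule R V}

lemma splitsAlong_of_image_mk_inter_eq_zero
    (h : QuotientAddGroup.mk' Γ '' A ∩ QuotientAddGroup.mk' Γ '' B = {0}) :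
    SplitsAlong Γ A B := by
  intro a ha b hb hab
  have hmk : QuotientAddGroup.mk' Γ a ∈
      QuotientAddGroup.mk' Γ '' A ∩ QuotientAddGroup.mk' Γ '' B :=
    ⟨⟨a, ha, rfl⟩, ⟨-b, B.neg_mem hb, QuotientAddGroup.eq.mpr (by simpa [add_comm] using hab)⟩⟩
  rw [h] at hmk
  exact (QuotientAddGroup.eq_zero_iff a).mp hmk

lemma SplitsAlong.subset_of_self (h : SplitsAlong Γ A A) : (A : Set V) ⊆ Γ :=
  fun a ha => h a ha (-a) (A.neg_mem ha) (by simp)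

lemma SplitsAlong.map {V' : Type*} [AddCommGroup V'] [Module R V'] (h : SplitsAlong Γ A B)
    (f : V ≃ₗ[R] V') :
    SplitsAlong (Γ.comap (f.symm : V' →+ V)) (A.map (f : V →ₗ[R] V')) (B.map (f : V →ₗ[R] V')) := by
  rintro _ ⟨a, ha, rfl⟩ _ ⟨b, hb, rfl⟩ hab
  simpa using h a ha b hb (by simpa using hab)

lemma SplitsAlong.smul_mem {u v : V} (h : SplitsAlong Γ (R ∙ u) (R ∙ v)) {x : V} (hx : x ∈ Γ)
    (s t : R) (hst : s • u + t • v = x) : s • u ∈ Γ :=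
  h _ (Submodule.smul_mem _ s (mem_span_singleton_self u)) _
    (Submodule.smul_mem _ t (mem_span_singleton_self v)) (hst ▸ hx)

end Splitting

lemma PairwiseSplitsAlong.pairwise_ne {K V ι : Type*} [DivisionRing K] [Uncountable K]
    [AddCommGroup V] [Module K V] {Γ : AddSubgroup V} {L : ι → Submodule K V}
    (h : PairwiseSplitsAlong Γ L) (hΓ : (Γ : Set V).Countable) (hL : ∀ i, L i ≠ ⊥) :
    Pairwise fun i j => L i ≠ L j := fun i j hij hLij => by
  have hLL : SplitsAlong Γ (L j) (L j) := by simpa only [hLij] using h hij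
  exact Submodule.not_subset_of_countable (hL j) hΓ hLL.subset_of_self


section Lines

variable {K V : Type*} [Field K] [AddCommGroup V] [Module K V]

def standardLines (c : K) (i : Fin 4) : Submodule K (K × K) :=
  K ∙ ![(0, 1), (1, 0), (1, 1), (c, 1)] i

lemma range_standardLines (c : K) :
    Set.range (standardLines c) = {K ∙ (0, 1), K ∙ (1, 0), K ∙ (1, 1), K ∙ (c, 1)} := by
  ext L
  simp [standardLines, Fin.exists_fin_succ, eq_comm]

variable {A B C : Submodule K V}

lemma eq_zero_of_mem_of_finrank_eq_one (hA : finrank K A = 1) (hB : finrank K B = 1)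
    (hAB : A ≠ B) {v : V} (hvA : v ∈ A) (hvB : v ∈ B) : v = 0 := by
  by_contra hv
  exact hAB ((eq_span_singleton_of_mem_of_finrank_eq_one hA hvA hv).trans
    (eq_span_singleton_of_mem_of_finrank_eq_one hB hvB hv).symm)

lemma sup_eq_top_of_finrank_eq_one [FiniteDimensional K V] (hV : finrank K V = 2)
    (hA : finrank K A = 1) (hB : finrank K B = 1) (hAB : A ≠ B) : A ⊔ B = ⊤ := by
  have hinf : A ⊓ B = ⊥ := (Submodule.eq_bot_iff _).mpr fun v hv =>
    eq_zero_of_mem_of_finrank_eq_one hA hB hAB hv.1 hv.2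
  apply eq_top_of_finrank_eq
  have := finrank_sup_add_finrank_inf_eq A B
  rw [hinf, finrank_bot, hA, hB] at this
  lia

lemma exists_linearEquiv_prod_apply_mem [FiniteDimensional K V] (hV : finrank K V = 2)
    (hA : finrank K A = 1) (hB : finrank K B = 1) (hC : finrank K C = 1)
    (hAB : A ≠ B) (hAC : A ≠ C) (hBC : B ≠ C) :
    ∃ e : (K × K) ≃ₗ[K] V, e (1, 0) ∈ A ∧ e (0, 1) ∈ B ∧ e (1, 1) ∈ C := by
  obtain ⟨v, hvC, hv0⟩ := C.ne_bot_iff.mp (isAtom_iff_finrank_eq_one.mpr hC).ne_bot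
  obtain ⟨a, ha, b, hb, rfl⟩ := mem_sup.mp
    ((sup_eq_top_of_finrank_eq_one hV hA hB hAB).symm ▸ mem_top : v ∈ A ⊔ B)
  have ha0 : a ≠ 0 := fun h =>
    hv0 (eq_zero_of_mem_of_finrank_eq_one hB hC hBC (by simpa [h]) hvC)
  have hb0 : b ≠ 0 := fun h =>
    hv0 (eq_zero_of_mem_of_finrank_eq_one hA hC hAC (by simpa [h]) hvC)
  let g := (LinearMap.toSpanSingleton K V a).coprod (LinearMap.toSpanSingleton K V b)
  have hg : ∀ s t, g (s, t) = s • a + t • b := fun _ _ => rfl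
  have hinj : Function.Injective g := by
    rw [← LinearMap.ker_eq_bot, eq_bot_iff]
    rintro ⟨s, t⟩ hst
    rw [LinearMap.mem_ker, hg] at hst
    have hsa : s • a = 0 := eq_zero_of_mem_of_finrank_eq_one hA hB hAB (smul_mem _ s ha)
      (by rw [eq_neg_of_add_eq_zero_left hst]; exact neg_mem (smul_mem _ t hb))
    have htb : t • b = 0 := by simpa [hsa] using hst
    simp [(smul_eq_zero.mp hsa).resolve_right ha0, (smul_eq_zero.mp htb).resolve_right hb0]
  refine ⟨.ofBijective g
    ⟨hinj, (LinearMap.injective_iff_surjective_of_finrank_eq_finrank (by simp [hV])).mp hinj⟩,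
    ?_, ?_, ?_⟩
  exacts [show g (1, 0) ∈ A by simpa [hg], show g (0, 1) ∈ B by simpa [hg],
    show g (1, 1) ∈ C by simpa [hg]]

lemma exists_linearEquiv_map_eq_standardLines [FiniteDimensional K V] (hV : finrank K V = 2)
    {W : Fin 4 → Submodule K V} (hW : ∀ i, finrank K (W i) = 1)
    (hWW : Pairwise fun i j => W i ≠ W j) :
    ∃ (f : V ≃ₗ[K] K × K) (c : K), c ≠ 0 ∧ c ≠ 1 ∧
      ∀ i, (W i).map (f : V →ₗ[K] K × K) = standardLines c i := by
  obtain ⟨e, he₁, he₀, he₂⟩ := exists_linearEquiv_prod_apply_mem hV (hW 1) (hW 0) (hW 2)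
    (hWW (by decide)) (hWW (by decide)) (hWW (by decide))
  obtain ⟨v, hv, hv0⟩ := (W 3).ne_bot_iff.mp (isAtom_iff_finrank_eq_one.mpr (hW 3)).ne_bot
  obtain ⟨⟨x, y⟩, rfl⟩ := e.surjective v
  have hxy : e (x, y) = x • e (1, 0) + y • e (0, 1) := by
    rw [← map_smul, ← map_smul, ← map_add]; simp
  have hW₃ : ∀ {i w}, i ≠ 3 → w ∈ W i → e (x, y) = w → False := fun hi hw h =>
    hv0 (eq_zero_of_mem_of_finrank_eq_one (hW 3) (hW _) (hWW hi.symm) hv (h ▸ hw))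
  have hx : x ≠ 0 := fun h => hW₃ (i := 0) (by decide) (smul_mem _ y he₀)
    (by rw [hxy, h, zero_smul, zero_add])
  have hy : y ≠ 0 := fun h => hW₃ (i := 1) (by decide) (smul_mem _ x he₁)
    (by rw [hxy, h, zero_smul, add_zero])
  have hline : ∀ {i u}, e u ∈ W i → u ≠ 0 → (K ∙ u).map (e : K × K →ₗ[K] V) = W i :=
    fun hu hu0 => by
      rw [map_span, Set.image_singleton]
      exact (eq_span_singleton_of_mem_of_finrank_eq_one (hW _) hu
        ((map_ne_zero_iff _ e.injective).mpr hu0)).symm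
  refine ⟨e.symm, x / y, div_ne_zero hx hy, fun h => ?_, fun i => ?_⟩
  · obtain rfl := (div_eq_one_iff_eq hy).mp h
    exact hW₃ (i := 2) (by decide) (smul_mem _ x he₂) (by rw [← map_smul]; simp)
  rw [map_symm_eq_iff]
  fin_cases i
  · exact hline he₀ (by simp)
  · exact hline he₁ (by simp)
  · exact hline he₂ (by simp)
  · refine hline (u := (x / y, 1)) ?_ (by simp)
    rw [show ((x / y, 1) : K × K) = y⁻¹ • (x, y) by simp [div_eq_inv_mul, hy], map_smul]
    exact smul_mem _ _ hv

end Lines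

namespace PairwiseSplitsAlong

variable {K : Type*} [Field K] {Γ : AddSubgroup (K × K)} {c : K}

lemma fst_mem (h : PairwiseSplitsAlong Γ (standardLines c)) {z w : K} (hzw : (z, w) ∈ Γ) :
    (z, 0) ∈ Γ := by
  simpa using (h (by decide : (1 : Fin 4) ≠ 0)).smul_mem hzw z w (by simp)

lemma snd_mem (h : PairwiseSplitsAlong Γ (standardLines c)) {z w : K} (hzw : (z, w) ∈ Γ) :
    (0, w) ∈ Γ := by
  simpa using Γ.sub_mem hzw (h.fst_mem hzw)

lemma swap_mem_iff (h : PairwiseSplitsAlong Γ (standardLines c)) (z : K) :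
    (0, z) ∈ Γ ↔ (z, 0) ∈ Γ := by
  constructor <;> intro hz
  · have hzz : (z, z) ∈ Γ := by
      simpa using (h (by decide : (2 : Fin 4) ≠ 1)).smul_mem hz z (-z) (by simp)
    exact h.fst_mem hzz
  · have hzz : (z, z) ∈ Γ := by
      simpa using (h (by decide : (2 : Fin 4) ≠ 0)).smul_mem hz z (-z) (by simp)
    exact h.snd_mem hzz

lemma mem_iff (h : PairwiseSplitsAlong Γ (standardLines c)) (z w : K) :
    (z, w) ∈ Γ ↔ (z, 0) ∈ Γ ∧ (w, 0) ∈ Γ := by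
  refine ⟨fun hzw => ⟨h.fst_mem hzw, (h.swap_mem_iff w).mp (h.snd_mem hzw)⟩,
    fun ⟨hz, hw⟩ => ?_⟩
  simpa using Γ.add_mem hz ((h.swap_mem_iff w).mpr hw)

lemma mul_mem_iff (h : PairwiseSplitsAlong Γ (standardLines c)) (z : K) :
    (c * z, 0) ∈ Γ ↔ (z, 0) ∈ Γ := by
  constructor <;> intro hz
  · have hczz : (z * c, z) ∈ Γ := by
      simpa using (h (by decide : (3 : Fin 4) ≠ 0)).smul_mem hz z (-z) (by simp [mul_comm])
    exact (h.swap_mem_iff z).mp (h.snd_mem hczz)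
  · have hczz : (z * c, z) ∈ Γ := by
      simpa using (h (by decide : (3 : Fin 4) ≠ 1)).smul_mem ((h.swap_mem_iff z).mpr hz)
        z (-(z * c)) (by simp)
    simpa [mul_comm] using h.fst_mem hczz

lemma one_sub_mul_mem_iff (h : PairwiseSplitsAlong Γ (standardLines c)) (z : K) :
    ((1 - c) * z, 0) ∈ Γ ↔ (z, 0) ∈ Γ := by
  constructor <;> intro hz
  · have hczz : (-z * c, -z) ∈ Γ := by
      simpa using (h (by decide : (3 : Fin 4) ≠ 2)).smul_mem hz (-z) z (by ext <;> simp; ring)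
    convert Γ.sub_mem (Γ.sub_mem hz hczz) (h.snd_mem (Γ.neg_mem hczz)) using 1
    ext <;> simp; ring
  · convert Γ.sub_mem hz ((h.mul_mem_iff z).mpr hz) using 1
    ext <;> simp; ring

end PairwiseSplitsAlong

section Eisenstein

noncomputable def eisensteinTau : ℂ := ⟨1 / 2, √3 / 2⟩

local notation "τ" => eisensteinTau

def eisensteinIntegers : Set ℂ := {z | ∃ m n : ℤ, z = m + n * τ}

lemma eisensteinTau_sq : τ ^ 2 = τ - 1 := by
  have h3 : √3 ^ 2 = 3 := Real.sq_sqrt (by norm_num)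
  apply Complex.ext <;> simp [pow_two, eisensteinTau] <;> nlinarith

lemma exp_pi_mul_I_div_three : exp (Real.pi * I / 3) = τ := by
  rw [show (Real.pi * I / 3 : ℂ) = ((Real.pi / 3 : ℝ) : ℂ) * I by push_cast; ring,
    exp_mul_I, ← ofReal_cos, ← ofReal_sin, Real.cos_pi_div_three, Real.sin_pi_div_three]
  apply Complex.ext <;> simp [eisensteinTau]

lemma eq_eisensteinTau_or_of_norm_eq_one {μ : ℂ} (h1 : ‖μ‖ = 1) (h2 : ‖1 - μ‖ = 1) :
    μ = τ ∨ μ = 1 - τ := by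
  have h3 : √3 ^ 2 = 3 := Real.sq_sqrt (by norm_num)
  have e1 := Complex.sq_norm μ
  have e2 := Complex.sq_norm (1 - μ)
  rw [h1, normSq_apply] at e1
  rw [h2, normSq_apply, sub_re, sub_im, one_re, one_im] at e2
  have hre : μ.re = 1 / 2 := by nlinarith
  have him : (μ.im - √3 / 2) * (μ.im + √3 / 2) = 0 := by nlinarith
  rcases mul_eq_zero.mp him with h | h
  · left; apply Complex.ext <;> simp [eisensteinTau, hre]; linarith
  · right; apply Complex.ext <;> simp [eisensteinTau, hre] <;> linarith

/-- Rounding in the basis `1, τ` leaves an error `x + yτ` with `|x|, |y| ≤ 1/2`, whose norm is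
at most `√3/2`. -/
lemma exists_mem_eisensteinIntegers_norm_sub_lt_one (z : ℂ) :
    ∃ w ∈ eisensteinIntegers, ‖z - w‖ < 1 := by
  have h3 : √3 ^ 2 = 3 := Real.sq_sqrt (by norm_num)
  have h3pos : 0 < √3 := by positivity
  set a := z.re - z.im / √3
  set b := 2 * z.im / √3
  refine ⟨round a + round b * τ, ⟨round a, round b, rfl⟩, ?_⟩
  set x := a - round a
  set y := b - round b
  obtain ⟨hx₁, hx₂⟩ := abs_le.mp (abs_sub_round a : |x| ≤ 1 / 2)
  obtain ⟨hy₁, hy₂⟩ := abs_le.mp (abs_sub_round b : |y| ≤ 1 / 2)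
  have hre : (z - (round a + round b * τ)).re = x + y / 2 := by
    simp only [sub_re, add_re, mul_re, intCast_re, intCast_im, eisensteinTau, x, y, a, b]
    field_simp
    ring
  have him : (z - (round a + round b * τ)).im = y * (√3 / 2) := by
    simp only [sub_im, add_im, mul_im, intCast_re, intCast_im, eisensteinTau, y, b]
    field_simp
    ring
  have hsq : ‖z - (round a + round b * τ)‖ ^ 2 ≤ 3 / 4 := by
    rw [Complex.sq_norm, normSq_apply, hre, him]
    have : y * (√3 / 2) * (y * (√3 / 2)) = 3 / 4 * y ^ 2 := by
      linear_combination y ^ 2 / 4 * h3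
    nlinarith
  nlinarith [norm_nonneg (z - (round a + round b * τ))]

lemma mul_mem_iff_mem_eisensteinIntegers {Λ : AddSubgroup ℂ} {m : ℂ} (hmΛ : m ∈ Λ)
    (hm0 : m ≠ 0) (hmin : ∀ z ∈ Λ, z ≠ 0 → ‖m‖ ≤ ‖z‖) (hτ : ∀ z ∈ Λ, τ * z ∈ Λ) (z : ℂ) :
    m * z ∈ Λ ↔ z ∈ eisensteinIntegers := by
  have hmem : ∀ w ∈ eisensteinIntegers, m * w ∈ Λ := by
    rintro _ ⟨p, q, rfl⟩
    rw [show m * (p + q * τ) = p • m + q • (τ * m) by simp only [zsmul_eq_mul]; ring]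
    exact Λ.add_mem (Λ.zsmul_mem hmΛ p) (Λ.zsmul_mem (hτ m hmΛ) q)
  refine ⟨fun hz => ?_, hmem z⟩
  obtain ⟨w, hw, hzw⟩ := exists_mem_eisensteinIntegers_norm_sub_lt_one z
  suffices m * (z - w) = 0 by
    rwa [← sub_eq_zero.mp ((mul_eq_zero.mp this).resolve_left hm0)] at hw
  by_contra h
  have := hmin _ (mul_sub m z w ▸ Λ.sub_mem hz (hmem w hw)) h
  rw [norm_mul] at this
  nlinarith [norm_pos_iff.mpr hm0]

lemma PairwiseSplitsAlong.exists_mul_mem_iff_eisensteinIntegers {Γ : AddSubgroup (ℂ × ℂ)}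
    [DiscreteTopology Γ] (hΓ : Γ ≠ ⊥) {c : ℂ} (hc0 : c ≠ 0) (hc1 : c ≠ 1)
    (h : PairwiseSplitsAlong Γ (standardLines c)) :
    (c = τ ∨ c = 1 - τ) ∧ ∃ m ≠ 0, ∀ z w,
      (m * z, m * w) ∈ Γ ↔ z ∈ eisensteinIntegers ∧ w ∈ eisensteinIntegers := by
  set Λ := Γ.comap (AddMonoidHom.inl ℂ ℂ)
  have : DiscreteTopology Λ := Γ.discreteTopology_comap (continuous_id.prodMk continuous_const)
    (Prod.mk_left_injective 0)
  have hΛ : Λ ≠ ⊥ := fun hΛ => by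
    obtain ⟨⟨z, w⟩, hzw, hzw0⟩ := Γ.bot_or_exists_ne_zero.resolve_left hΓ
    obtain ⟨hz, hw⟩ := (h.mem_iff z w).mp hzw
    exact hzw0 (Prod.ext (AddSubgroup.mem_bot.mp (hΛ ▸ hz : z ∈ (⊥ : AddSubgroup ℂ)))
      (AddSubgroup.mem_bot.mp (hΛ ▸ hw : w ∈ (⊥ : AddSubgroup ℂ))))
  obtain ⟨m, hmΛ, hm0, hmin⟩ := Λ.exists_norm_le_of_discreteTopology hΛ
  have hc : c = τ ∨ c = 1 - τ := eq_eisensteinTau_or_of_norm_eq_one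
    (norm_eq_one_of_mul_mem_iff hmΛ hm0 hmin hc0 h.mul_mem_iff)
    (norm_eq_one_of_mul_mem_iff hmΛ hm0 hmin (sub_ne_zero.mpr hc1.symm) h.one_sub_mul_mem_iff)
  have hτ : ∀ z ∈ Λ, τ * z ∈ Λ := by
    rcases hc with rfl | rfl
    · exact fun z => (h.mul_mem_iff z).mpr
    · exact fun z hz => (by simpa using (h.one_sub_mul_mem_iff z).mpr hz : (τ * z, 0) ∈ Γ)
  refine ⟨hc, m, hm0, fun z w => ?_⟩
  rw [h.mem_iff]
  exact and_congr (mul_mem_iff_mem_eisensteinIntegers hmΛ hm0 hmin hτ z)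
    (mul_mem_iff_mem_eisensteinIntegers hmΛ hm0 hmin hτ w)

lemma exists_linearEquiv_image_eq_eisensteinIntegers_prod {Γ : AddSubgroup (ℂ × ℂ)} {c m : ℂ}
    (hc : c = τ ∨ c = 1 - τ) (hm : m ≠ 0)
    (hΓ : ∀ z w, (m * z, m * w) ∈ Γ ↔ z ∈ eisensteinIntegers ∧ w ∈ eisensteinIntegers) :
    ∃ g : (ℂ × ℂ) ≃ₗ[ℂ] (ℂ × ℂ), g '' Γ = eisensteinIntegers ×ˢ eisensteinIntegers ∧
      Set.range (fun i => (standardLines c i).map (g : (ℂ × ℂ) →ₗ[ℂ] (ℂ × ℂ))) =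
        Set.range (standardLines τ) := by
  set s := LinearEquiv.smulOfNeZero ℂ (ℂ × ℂ) m⁻¹ (inv_ne_zero hm)
  have hsΓ : s '' Γ = eisensteinIntegers ×ˢ eisensteinIntegers := by
    ext ⟨z, w⟩
    rw [s.image_eq_preimage_symm]
    simp [s, Units.smul_def, hΓ]
  have hs : ∀ i, (standardLines c i).map (s : (ℂ × ℂ) →ₗ[ℂ] (ℂ × ℂ)) = standardLines c i := by
    intro i
    rw [standardLines, map_span, Set.image_singleton]
    exact span_singleton_smul_eq (IsUnit.mk0 _ (inv_ne_zero hm)) _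
  rcases hc with rfl | rfl
  · exact ⟨s, hsΓ, by simp_rw [hs]⟩
  set σ := LinearEquiv.prodComm ℂ ℂ ℂ
  refine ⟨s.trans σ, ?_, ?_⟩
  · rw [show ⇑(s.trans σ) = Prod.swap ∘ s from rfl, Set.image_comp, hsΓ]
    exact Set.image_swap_prod _ _
  have hτ0 : τ ≠ 0 := fun h0 => by simpa [h0] using eisensteinTau_sq
  have hσ : ∀ i, (standardLines (1 - τ) i).map ((s.trans σ) : (ℂ × ℂ) →ₗ[ℂ] (ℂ × ℂ)) =
      standardLines τ (Equiv.swap 0 1 i) := by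
    intro i
    rw [LinearEquiv.coe_trans, map_comp, hs, standardLines, map_span, Set.image_singleton]
    fin_cases i <;> simp [σ, standardLines, Equiv.swap_apply_of_ne_of_ne]
    -- `ℂ ∙ (1, 1 - τ) = ℂ ∙ (τ, 1)` because `τ (1 - τ) = 1`
    rw [← span_singleton_smul_eq (IsUnit.mk0 _ hτ0)]
    congr 2
    simp only [Prod.smul_mk, smul_eq_mul, mul_one, mul_sub, ← sq, eisensteinTau_sq,
      sub_sub_cancel]
  simp_rw [hσ]
  exact (Equiv.swap 0 1).surjective.range_comp (standardLines τ)

lemma PairwiseSplitsAlong.exists_linearEquiv {Γ : AddSubgroup (ℂ × ℂ)} [DiscreteTopology Γ]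
    (hΓ : Γ ≠ ⊥) {W : Fin 4 → Submodule ℂ (ℂ × ℂ)} (hW : ∀ i, finrank ℂ (W i) = 1)
    (h : PairwiseSplitsAlong Γ W) :
    ∃ f : (ℂ × ℂ) ≃ₗ[ℂ] (ℂ × ℂ), f '' Γ = eisensteinIntegers ×ˢ eisensteinIntegers ∧
      Set.range (fun i => (W i).map (f : (ℂ × ℂ) →ₗ[ℂ] (ℂ × ℂ))) =
        Set.range (standardLines τ) := by
  have : Uncountable ℂ := Set.not_countable_univ_iff.mp not_countable_complex
  have hWW := h.pairwise_ne
    (Set.countable_coe_iff.mp (TopologicalSpace.separableSpace_iff_countable.mp inferInstance))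
    fun i => (isAtom_iff_finrank_eq_one.mpr (hW i)).ne_bot
  obtain ⟨f, c, hc0, hc1, hfW⟩ := exists_linearEquiv_map_eq_standardLines (by simp) hW hWW
  set Γ' := Γ.comap (f.symm : ℂ × ℂ →+ ℂ × ℂ)
  have : DiscreteTopology Γ' := Γ.discreteTopology_comap
    f.symm.toLinearMap.continuous_of_finiteDimensional f.symm.injective
  have hΓ' : Γ' ≠ ⊥ := fun h' => hΓ <| by
    rw [← AddSubgroup.map_comap_eq_self_of_surjective (f := (f.symm : ℂ × ℂ →+ ℂ × ℂ))
      f.symm.surjective Γ]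
    exact (congrArg _ h').trans (AddSubgroup.map_bot _)
  have h' : PairwiseSplitsAlong Γ' (standardLines c) := fun i j hij => by
    simpa only [hfW] using (h hij).map f
  obtain ⟨hc, m, hm, hmΓ⟩ := h'.exists_mul_mem_iff_eisensteinIntegers hΓ' hc0 hc1
  obtain ⟨g, hgΓ, hgW⟩ := exists_linearEquiv_image_eq_eisensteinIntegers_prod hc hm hmΓ
  refine ⟨f.trans g, ?_, ?_⟩
  · rw [show ⇑(f.trans g) = g ∘ f from rfl, Set.image_comp, f.image_eq_preimage_symm]
    exact hgΓ
  · simp_rw [LinearEquiv.coe_trans, map_comp, hfW, hgW]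

end Eisenstein

open Complex in
theorem unique_good_configuration_general (Γ : AddSubgroup (ℂ × ℂ))
    (hΓ : ∃ b : Fin 4 → ℂ × ℂ, LinearIndependent ℝ b ∧
      (Γ : Set (ℂ × ℂ)) = {x | ∃ c : Fin 4 → ℤ, x = ∑ i, c i • b i})
    (π : (ℂ × ℂ) →+ (ℂ × ℂ) ⧸ Γ) (hπ : π = QuotientAddGroup.mk' Γ)
    (W : Fin 4 → Submodule ℂ (ℂ × ℂ))
    (hrank : ∀ i, Module.finrank ℂ (W i) = 1)
    (hpair : ∀ i j, i ≠ j →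
      (π '' (W i : Set (ℂ × ℂ))) ∩ (π '' (W j : Set (ℂ × ℂ))) = {0}) :
    ∃ f : (ℂ × ℂ) ≃ₗ[ℂ] (ℂ × ℂ),
      (⇑f '' (Γ : Set (ℂ × ℂ)) =
        {p : ℂ × ℂ |
          (∃ m n : ℤ, p.1 = (m : ℂ) + n * Complex.exp (Real.pi * I / 3)) ∧
          (∃ m n : ℤ, p.2 = (m : ℂ) + n * Complex.exp (Real.pi * I / 3))}) ∧
      (Set.range (fun i => Submodule.map (f : (ℂ × ℂ) →ₗ[ℂ] (ℂ × ℂ)) (W i)) =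
        {Submodule.span ℂ {((0 : ℂ), (1 : ℂ))},
         Submodule.span ℂ {((1 : ℂ), (0 : ℂ))},
         Submodule.span ℂ {((1 : ℂ), (1 : ℂ))},
         Submodule.span ℂ {(Complex.exp (Real.pi * I / 3), (1 : ℂ))}}) := by
  subst hπ
  obtain ⟨b, hb, hΓb⟩ := hΓ
  have : DiscreteTopology Γ := AddSubgroup.discreteTopology_of_linearIndependent hb hΓb
  have hb₀ : b 0 ∈ Γ := by
    rw [← SetLike.mem_coe, hΓb]
    exact ⟨Pi.single 0 1, by simp [Pi.single_apply]⟩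
  have hΓ0 : Γ ≠ ⊥ := fun h => hb.ne_zero 0 (by simpa [h] using hb₀)
  have hsplit : PairwiseSplitsAlong Γ W := fun i j hij =>
    splitsAlong_of_image_mk_inter_eq_zero (hpair i j hij)
  obtain ⟨f, hfΓ, hfW⟩ := hsplit.exists_linearEquiv hΓ0 hrank
  rw [exp_pi_mul_I_div_three, ← range_standardLines, ← hfW]
  exact ⟨f, hfΓ, rfl⟩

open Complex in
/-- Up to isomorphism, the unique configuration of four one-dimensional
subtori through the origin of a complex abelian surface `Y = ℂ²/Γ`, pairwise intersecting
only at the origin, is `Y = C × C` with `C = ℂ/(ℤ + ℤτ)`, `τ = e^{πi/3}`, and the four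
curves `w = 0`, `z = 0`, `w = z`, `w = τz`.  The subtori are modelled as images under the
quotient map `π` of one-dimensional complex subspaces `W i ⊆ ℂ²` each meeting the lattice
`Γ` in a rank-two subgroup (so that the image is a compact elliptic curve); the conclusion
produces a ℂ-linear isomorphism of `ℂ²` carrying `Γ` to the product lattice
`(ℤ + ℤτ) × (ℤ + ℤτ)` and the four subspaces to the four standard lines
`span(0,1), span(1,0), span(1,1), span(τ,1)`. -/
theorem unique_good_configuration (Γ : AddSubgroup (ℂ × ℂ))
    (hΓ : ∃ b : Fin 4 → ℂ × ℂ, LinearIndependent ℝ b ∧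
      (Γ : Set (ℂ × ℂ)) = {x | ∃ c : Fin 4 → ℤ, x = ∑ i, c i • b i})
    (π : (ℂ × ℂ) →+ (ℂ × ℂ) ⧸ Γ) (hπ : π = QuotientAddGroup.mk' Γ)
    (W : Fin 4 → Submodule ℂ (ℂ × ℂ))
    (hrank : ∀ i, Module.finrank ℂ (W i) = 1)
    (hcompact : ∀ i, ∃ v w : ℂ × ℂ, LinearIndependent ℝ ![v, w] ∧
      v ∈ W i ∧ v ∈ Γ ∧ w ∈ W i ∧ w ∈ Γ)
    (hpair : ∀ i j, i ≠ j →
      (π '' (W i : Set (ℂ × ℂ))) ∩ (π '' (W j : Set (ℂ × ℂ))) = {0}) :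
    ∃ f : (ℂ × ℂ) ≃ₗ[ℂ] (ℂ × ℂ),
      (⇑f '' (Γ : Set (ℂ × ℂ)) =
        {p : ℂ × ℂ |
          (∃ m n : ℤ, p.1 = (m : ℂ) + n * Complex.exp (Real.pi * I / 3)) ∧
          (∃ m n : ℤ, p.2 = (m : ℂ) + n * Complex.exp (Real.pi * I / 3))}) ∧
      (Set.range (fun i => Submodule.map (f : (ℂ × ℂ) →ₗ[ℂ] (ℂ × ℂ)) (W i)) =
        {Submodule.span ℂ {((0 : ℂ), (1 : ℂ))},
         Submodule.span ℂ {((1 : ℂ), (0 : ℂ))},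
         Submodule.span ℂ {((1 : ℂ), (1 : ℂ))},
         Submodule.span ℂ {(Complex.exp (Real.pi * I / 3), (1 : ℂ))}}) :=
  unique_good_configuration_general Γ hΓ π hπ W hrank hpair
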